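/- Let r be a positive integer. The toric link group T_{2,2r} = ⟨a, b ∣ (ab)ʳ = (ba)ʳ⟩ is linear: there exist a field F, a natural number n, and an injective group homomorphism from T_{2,2r} into GL(n, F). -/

import Mathlib

/-- Relator of the toric link group `T_{2,2r} = ⟨a, b ∣ (ab)ʳ = (ba)ʳ⟩`,
with `a = 0`, `b = 1`. -/
def toric2Rels (r : ℕ) : Set (FreeGroup (Fin 2)) :=
  {(FreeGroup.of 0 * FreeGroup.of 1) ^ r * ((FreeGroup.of 1 * FreeGroup.of 0) ^ r)⁻¹}

/-!
The full twist `z = (ab)ʳ` is central, and `a ↦ t`, `b ↦ t⁻¹ζ` induces an isomorphism of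
`T_{2,2r} ⧸ ⟨z⟩` with the free product `ℤ ∗ ℤ/r = ⟨t⟩ ∗ ⟨ζ⟩`, inverse to `t ↦ a`, `ζ ↦ ab`.
This free product acts faithfully on `K²`, `K = ℂ(X)`, by ping-pong with respect to the
valuation `v` at infinity: `tᵏ` acts as `diag(Xᵏ, 1)`, which sends vectors with `v w₀ = v w₁`
to vectors with `v w₀ ≠ v w₁`, and a root of unity `u ≠ 1` acts as a conjugate of `diag(u, 1)`
whose entries are nonzero constants, which sends them back. The degree map `a, b ↦ 1` to `ℤ`
sends `z` to `2r`, so it is injective on `⟨z⟩`; adding the character `g ↦ diag(X^{deg g}, 1)`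
as a second block makes the representation faithful.
-/

open Matrix Subgroup

theorem MonoidHom.prod_injective_of_ker_le {G H A : Type*} [Group G] [Group H] [Group A]
    {f : G →* H} {g : G →* A} {N : Subgroup G} (hf : f.ker ≤ N) (hg : Disjoint N g.ker) :
    Function.Injective (f.prod g) := by
  rw [← MonoidHom.ker_eq_bot_iff, MonoidHom.ker_prod, ← disjoint_iff]
  exact hg.mono_left hf

theorem mul_inv_mul_pow_eq_of_pow_eq_one {H : Type*} [Group H] {r : ℕ} (x : H) {y : H}
    (hy : y ^ r = 1) : (x * (x⁻¹ * y)) ^ r = (x⁻¹ * y * x) ^ r := by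
  have hconj : (x⁻¹ * y * x⁻¹⁻¹) ^ r = 1 := by rw [conj_pow, hy, mul_one, mul_inv_cancel]
  rw [mul_inv_cancel_left, hy, ← hconj, inv_inv]

section ValuationPingPong

variable {K Γ₀ : Type*} [Field K] [LinearOrderedCommGroupWithZero Γ₀] (v : Valuation K Γ₀)

def balancedVectors : Set (Fin 2 → K) := {w | w 0 ≠ 0 ∧ v (w 0) = v (w 1)}

def unbalancedVectors : Set (Fin 2 → K) := {w | v (w 0) ≠ v (w 1)}

variable {v}

theorem disjoint_unbalancedVectors_balancedVectors :
    Disjoint (unbalancedVectors v) (balancedVectors v) :=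
  Set.disjoint_left.mpr fun _ hne hbal => hne hbal.2

theorem mulVec_mem_balancedVectors {M : Matrix (Fin 2) (Fin 2) K} (hM : ∀ i j, v (M i j) = 1)
    {w : Fin 2 → K} (hw : w ∈ unbalancedVectors v) : M *ᵥ w ∈ balancedVectors v := by
  have hval (i : Fin 2) : v ((M *ᵥ w) i) = max (v (w 0)) (v (w 1)) := by
    rw [mulVec, dotProduct, Fin.sum_univ_two, Valuation.map_add_of_distinct_val]
    · simp [hM]
    · simpa [hM, unbalancedVectors] using hw
  refine ⟨fun h0 => hw ?_, by rw [hval, hval]⟩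
  have hmax := hval 0
  rw [h0, map_zero, eq_comm, max_eq_zero] at hmax
  exact hmax.1.trans hmax.2.symm

theorem diagonal_mulVec_mem_unbalancedVectors {d : Fin 2 → K} (hd : v (d 0) ≠ v (d 1))
    {w : Fin 2 → K} (hw : w ∈ balancedVectors v) : diagonal d *ᵥ w ∈ unbalancedVectors v := by
  simp only [unbalancedVectors, Set.mem_ofPred_eq, mulVec_diagonal, map_mul, ← hw.2]
  exact fun h => hd (mul_right_cancel₀ ((v.ne_zero_iff).mpr hw.1) h)

end ValuationPingPong

namespace Matrix.GeneralLinearGroup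

section Diagonal

variable {n R : Type*} [Fintype n] [DecidableEq n] [CommRing R]

def diagonalHom : (n → Rˣ) →* GL n R :=
  (Units.map (diagonalRingHom n R).toMonoidHom).comp MulEquiv.piUnits.symm.toMonoidHom

@[simp]
theorem coe_diagonalHom (d : n → Rˣ) :
    (diagonalHom d : Matrix n n R) = diagonal fun i => (d i : R) :=
  rfl

theorem diagonalHom_injective : Function.Injective (diagonalHom (n := n) (R := R)) :=
  fun d e h => funext fun i => Units.ext <| by simpa using congrArg (fun g : GL n R => g i i) h

def diagOneHom : Rˣ →* GL (Fin 2) R :=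
  diagonalHom.comp (MonoidHom.mulSingle (fun _ : Fin 2 => Rˣ) 0)

theorem coe_diagOneHom (u : Rˣ) :
    (diagOneHom u : Matrix (Fin 2) (Fin 2) R) = diagonal ![(u : R), 1] := by
  simp [diagOneHom, diagonal_fin_two]

theorem diagOneHom_injective : Function.Injective (diagOneHom (R := R)) :=
  fun _ _ h => Pi.mulSingle_injective 0 (diagonalHom_injective h)

-- Any `P` will do for which no entry of `P * diag(u, 1) * P⁻¹` vanishes at a root of unity `u ≠ 1`.
def twistMatrix : GL (Fin 2) R :=
  ⟨!![2, 1; 1, 1], !![1, -1; -1, 2], by rw [mul_fin_two, one_fin_two]; norm_num,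
    by rw [mul_fin_two, one_fin_two]; norm_num⟩

def twistedDiagonalHom : Rˣ →* GL (Fin 2) R :=
  (MulAut.conj twistMatrix).toMonoidHom.comp diagOneHom

theorem coe_twistedDiagonalHom (u : Rˣ) : (twistedDiagonalHom u : Matrix (Fin 2) (Fin 2) R) =
    !![2 * (u : R) - 1, 2 - 2 * u; u - 1, 2 - u] := by
  change !![2, 1; 1, 1] * (diagOneHom u : Matrix (Fin 2) (Fin 2) R) * !![1, -1; -1, 2] = _
  rw [coe_diagOneHom, diagonal_fin_two, mul_fin_two, mul_fin_two]
  simp only [cons_val_zero, cons_val_one, cons_val_fin_one]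
  ring_nf

end Diagonal

section Blocks

variable {m n R : Type*} [Fintype m] [DecidableEq m] [Fintype n] [DecidableEq n] [CommRing R]

def fromBlocksHom : GL m R × GL n R →* GL (m ⊕ n) R where
  toFun p := ⟨fromBlocks p.1 0 0 p.2, fromBlocks ↑p.1⁻¹ 0 0 ↑p.2⁻¹, by simp [fromBlocks_multiply],
    by simp [fromBlocks_multiply]⟩
  map_one' := Units.ext <| by simp
  map_mul' p q := Units.ext <| by simp [fromBlocks_multiply]

theorem fromBlocksHom_injective :
    Function.Injective (fromBlocksHom (m := m) (n := n) (R := R)) := fun p q h => by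
  obtain ⟨h₁, -, -, h₂⟩ := fromBlocks_inj.mp (congrArg Units.val h)
  exact Prod.ext (Units.ext h₁) (Units.ext h₂)

end Blocks

theorem exists_injective_monoidHom_fin {G ι R : Type*} [Group G] [Fintype ι] [DecidableEq ι]
    [CommRing R] {φ : G →* GL ι R} (hφ : Function.Injective φ) :
    ∃ n, ∃ ψ : G →* GL (Fin n) R, Function.Injective ψ := by
  let e : GL ι R ≃* GL (Fin (Fintype.card ι)) R :=
    Units.mapEquiv (reindexRingEquiv R (Fintype.equivFin ι)).toMulEquiv
  exact ⟨_, e.toMonoidHom.comp φ, e.injective.comp hφ⟩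

end Matrix.GeneralLinearGroup

open Matrix.GeneralLinearGroup

theorem twistedDiagonalHom_apply_ne_zero {u : ℂˣ} (hnorm : ‖(u : ℂ)‖ = 1) (hu : u ≠ 1)
    (i j : Fin 2) : (twistedDiagonalHom u : Matrix (Fin 2) (Fin 2) ℂ) i j ≠ 0 := by
  have hu' : (u : ℂ) ≠ 1 := mt Units.val_eq_one.mp hu
  have h2 : (u : ℂ) ≠ 2 := fun h => by rw [h] at hnorm; norm_num at hnorm
  have h12 : (u : ℂ) ≠ 1 / 2 := fun h => by rw [h] at hnorm; norm_num at hnorm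
  rw [coe_twistedDiagonalHom]
  fin_cases i <;> fin_cases j <;>
    simp only [Fin.zero_eta, Fin.mk_one, Fin.isValue, of_apply, cons_val', cons_val_zero,
      cons_val_one, cons_val_fin_one, ne_eq] <;> intro h
  · exact h12 (by linear_combination h / 2)
  · exact hu' (by linear_combination -h / 2)
  · exact hu' (by linear_combination h)
  · exact h2 (by linear_combination -h)

noncomputable section

-- The factors `ℤ` and `ℤ/r` of `T_{2,2r} ⧸ ⟨(ab)ʳ⟩`, with `ℤ/r` realised as the `r`-th roots of
-- unity in `ℂ`.
abbrev cyclicFactor (r : ℕ) : Bool → Type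
  | true => Multiplicative ℤ
  | false => rootsOfUnity r ℂ

instance (r : ℕ) : ∀ b, Group (cyclicFactor r b)
  | true => inferInstanceAs (Group (Multiplicative ℤ))
  | false => inferInstanceAs (Group (rootsOfUnity r ℂ))

def xPowHom : Multiplicative ℤ →* GL (Fin 2) (RatFunc ℂ) :=
  diagOneHom.comp (zpowersHom _ (Units.mk0 RatFunc.X RatFunc.X_ne_zero))

theorem coe_xPowHom (k : Multiplicative ℤ) :
    (xPowHom k : Matrix (Fin 2) (Fin 2) (RatFunc ℂ)) = diagonal ![RatFunc.X ^ k.toAdd, 1] := by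
  rw [xPowHom, MonoidHom.comp_apply, zpowersHom_apply, coe_diagOneHom,
    Units.val_zpow_eq_zpow_val]
  rfl

def factorRep (r : ℕ) : ∀ b, cyclicFactor r b →* GL (Fin 2) (RatFunc ℂ)
  | true => xPowHom
  | false =>
    (GeneralLinearGroup.map RatFunc.C).comp (twistedDiagonalHom.comp (rootsOfUnity r ℂ).subtype)

theorem inftyValuation_factorRep_false_apply [DecidableEq (RatFunc ℂ)] {r : ℕ} [NeZero r]
    {g : rootsOfUnity r ℂ} (hg : g ≠ 1) (i j : Fin 2) :
    RatFunc.inftyValuation ℂ (factorRep r false g i j) = 1 :=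
  (congrArg _ (GeneralLinearGroup.map_apply _ _ _ _)).trans <| RatFunc.inftyValuation.C ℂ <|
    twistedDiagonalHom_apply_ne_zero (Complex.norm_eq_one_of_mem_rootsOfUnity g.2)
      (fun h => hg (Subtype.ext h)) i j

theorem inftyValuation_X_zpow_ne_one [DecidableEq (RatFunc ℂ)] {k : ℤ} (hk : k ≠ 0) :
    RatFunc.inftyValuation ℂ (RatFunc.X ^ k) ≠ 1 := by
  rwa [RatFunc.inftyValuation.X_zpow, Ne, WithZero.exp_eq_one]

theorem xPowHom_injective : Function.Injective xPowHom := by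
  classical
  refine diagOneHom_injective.comp fun k l h => ?_
  have := congrArg (fun u : (RatFunc ℂ)ˣ => RatFunc.inftyValuation ℂ u) h
  simpa using this

theorem lift_factorRep_injective (r : ℕ) [NeZero r] :
    Function.Injective (Monoid.CoprodI.lift (factorRep r)) := by
  classical
  let v := RatFunc.inftyValuation ℂ
  refine Monoid.CoprodI.lift_injective_of_ping_pong (factorRep r) (Or.inr ⟨true, ?_⟩)
    (fun b => cond b (unbalancedVectors v) (balancedVectors v)) ?_ ?_ ?_
  · show 3 ≤ Cardinal.mk (Multiplicative ℤ)
    simp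
  · rintro (_ | _)
    · exact ⟨![1, 1], by simp [balancedVectors]⟩
    · exact ⟨![RatFunc.X, 1], by simp [unbalancedVectors, v]⟩
  · rintro (_ | _) (_ | _) h
    exacts [absurd rfl h, disjoint_unbalancedVectors_balancedVectors.symm,
      disjoint_unbalancedVectors_balancedVectors, absurd rfl h]
  · rintro (_ | _) (_ | _) h g hg _ ⟨w, hw, rfl⟩
    · exact absurd rfl h
    · show (factorRep r false g : Matrix (Fin 2) (Fin 2) (RatFunc ℂ)) *ᵥ w ∈ balancedVectors v
      exact mulVec_mem_balancedVectors (inftyValuation_factorRep_false_apply hg) hw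
    · show (xPowHom g : Matrix _ _ _) *ᵥ w ∈ unbalancedVectors v
      rw [coe_xPowHom]
      refine diagonal_mulVec_mem_unbalancedVectors ?_ hw
      simpa [v] using inftyValuation_X_zpow_ne_one (toAdd_eq_zero.not.mpr hg)
    · exact absurd rfl h

namespace ToricLinkGroup

variable {r : ℕ}

local notation "T" r => PresentedGroup (toric2Rels r)

theorem of_mul_of_pow_comm : ((.of 0 * .of 1) ^ r : T r) = (.of 1 * .of 0) ^ r := by
  have := PresentedGroup.one_of_mem (rels := toric2Rels r) rfl
  rwa [map_mul, map_inv, map_pow, map_pow, map_mul, map_mul, mul_inv_eq_one] at this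

def lift {H : Type*} [Group H] (x y : H) (h : (x * y) ^ r = (y * x) ^ r) : (T r) →* H :=
  PresentedGroup.toGroup (f := ![x, y]) <| by
    rintro _ rfl
    simp [h]

section Lift

variable {H : Type*} [Group H] {x y : H} (h : (x * y) ^ r = (y * x) ^ r)

@[simp]
theorem lift_of_zero : lift x y h (.of 0) = x := PresentedGroup.toGroup.of _

@[simp]
theorem lift_of_one : lift x y h (.of 1) = y := PresentedGroup.toGroup.of _

end Lift

variable (r) in
def fullTwist : T r := (.of 0 * .of 1) ^ r

theorem commute_of_zero_fullTwist : Commute (.of 0 : T r) (fullTwist r) :=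
  calc .of 0 * fullTwist r = .of 0 * (.of 1 * .of 0) ^ r := by rw [fullTwist, of_mul_of_pow_comm]
    _ = fullTwist r * .of 0 := SemiconjBy.pow_right (mul_assoc _ _ _).symm r

theorem commute_of_one_fullTwist : Commute (.of 1 : T r) (fullTwist r) :=
  calc .of 1 * fullTwist r = (.of 1 * .of 0) ^ r * .of 1 :=
      SemiconjBy.pow_right (mul_assoc _ _ _).symm r
    _ = fullTwist r * .of 1 := by rw [fullTwist, of_mul_of_pow_comm]

theorem fullTwist_mem_center : fullTwist r ∈ center (T r) := by
  refine mem_center_iff.mpr fun g => mem_centralizer_singleton_iff.mp <|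
    PresentedGroup.generated_by _ _ (fun i => mem_centralizer_singleton_iff.mpr ?_) g
  fin_cases i
  · exact commute_of_zero_fullTwist.eq
  · exact commute_of_one_fullTwist.eq

instance : (zpowers (fullTwist r)).Normal where
  conj_mem n hn g := by
    rwa [mem_center_iff.mp (zpowers_le.mpr fullTwist_mem_center hn) g, mul_inv_cancel_right]

section FreeProduct

open Monoid

variable (ζ : rootsOfUnity r ℂ)

theorem of_rootsOfUnity_pow_eq_one : CoprodI.of (M := cyclicFactor r) (i := false) ζ ^ r = 1 := by
  have hζ : ζ ^ r = 1 := Subtype.ext ζ.2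
  rw [← map_pow, hζ, map_one]

abbrev intGenerator : CoprodI (cyclicFactor r) := CoprodI.of (i := true) (Multiplicative.ofAdd 1)

theorem toFreeProd_rel :
    (intGenerator * (intGenerator⁻¹ * CoprodI.of (i := false) ζ)) ^ r =
      (intGenerator⁻¹ * CoprodI.of (i := false) ζ * intGenerator) ^ r :=
  mul_inv_mul_pow_eq_of_pow_eq_one _ (of_rootsOfUnity_pow_eq_one ζ)

def toFreeProd : (T r) →* CoprodI (cyclicFactor r) :=
  lift _ _ (toFreeProd_rel ζ)

variable [NeZero r] {ζ}

def freeProdToQuotient (hζ : ∀ u, u ∈ zpowers ζ) :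
    CoprodI (cyclicFactor r) →* (T r) ⧸ zpowers (fullTwist r) :=
  CoprodI.lift fun
    | true => zpowersHom _ (QuotientGroup.mk (.of 0))
    | false => monoidHomOfForallMemZpowers hζ (g' := QuotientGroup.mk (.of 0 * .of 1)) <| by
      rw [orderOf_eq_card_of_forall_mem_zpowers hζ, Complex.card_rootsOfUnity]
      refine orderOf_dvd_of_pow_eq_one ?_
      rw [← QuotientGroup.mk_pow, QuotientGroup.eq_one_iff]
      exact mem_zpowers _

theorem freeProdToQuotient_comp_toFreeProd (hζ : ∀ u, u ∈ zpowers ζ) :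
    (freeProdToQuotient hζ).comp (toFreeProd ζ) = QuotientGroup.mk' _ := by
  refine PresentedGroup.ext fun i => ?_
  fin_cases i <;> simp [toFreeProd, freeProdToQuotient]

theorem ker_toFreeProd_le (hζ : ∀ u, u ∈ zpowers ζ) :
    (toFreeProd ζ).ker ≤ zpowers (fullTwist r) := by
  intro g hg
  rw [← QuotientGroup.ker_mk' (zpowers (fullTwist r)), ← freeProdToQuotient_comp_toFreeProd hζ]
  exact MonoidHom.mem_ker.mpr (by rw [MonoidHom.comp_apply, hg, map_one])

end FreeProduct

def degree : (T r) →* Multiplicative ℤ := lift (.ofAdd 1) (.ofAdd 1) rfl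

theorem degree_fullTwist : degree (fullTwist r) = .ofAdd (2 * r : ℤ) := by
  rw [fullTwist, map_pow, map_mul, degree, lift_of_zero, lift_of_one, ← ofAdd_add, ← ofAdd_nsmul,
    nsmul_eq_mul, one_add_one_eq_two, mul_comm]

theorem disjoint_zpowers_fullTwist_ker_degree [NeZero r] :
    Disjoint (zpowers (fullTwist r)) degree.ker := by
  refine disjoint_def.mpr ?_
  rintro _ ⟨k, rfl⟩ hk
  rw [MonoidHom.mem_ker, map_zpow, degree_fullTwist, ← ofAdd_zsmul, ofAdd_eq_one, smul_eq_mul,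
    mul_eq_zero, mul_eq_zero] at hk
  obtain hk | hk | hr := hk
  · simp [hk]
  · norm_num at hk
  · exact absurd (Nat.cast_eq_zero.mp hr) (NeZero.ne r)

end ToricLinkGroup

end

open ToricLinkGroup in
/-- The toric link group `T_{2,2r} = ⟨a, b ∣ (ab)ʳ = (ba)ʳ⟩` is linear. -/
theorem stmt_15 (r : ℕ) (hr : 0 < r) :
    ∃ (F : Type) (_ : Field F) (n : ℕ)
      (φ : PresentedGroup (toric2Rels r) →* Matrix.GeneralLinearGroup (Fin n) F),
      Function.Injective φ := by
  have : NeZero r := ⟨hr.ne'⟩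
  obtain ⟨ζ, hζ⟩ := IsCyclic.exists_generator (α := rootsOfUnity r ℂ)
  have hquot : Function.Injective ((toFreeProd ζ).prod degree) :=
    MonoidHom.prod_injective_of_ker_le (ker_toFreeProd_le hζ) disjoint_zpowers_fullTwist_ker_degree
  have hrep : Function.Injective ((Monoid.CoprodI.lift (factorRep r)).prodMap xPowHom) :=
    Prod.map_injective.mpr ⟨lift_factorRep_injective r, xPowHom_injective⟩
  obtain ⟨n, φ, hφ⟩ := exists_injective_monoidHom_fin (φ := fromBlocksHom.comp
    (((Monoid.CoprodI.lift (factorRep r)).prodMap xPowHom).comp ((toFreeProd ζ).prod degree)))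
    (fromBlocksHom_injective.comp (hrep.comp hquot))
  exact ⟨RatFunc ℂ, inferInstance, n, φ, hφ⟩
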